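/- In ℝ³ with points p_1,…,p_n pairwise distinct, the translation, scaling, and three coordinated-rotation vector fields — i.e., ṗ_k = v (v ∈ ℝ³), ṗ_k = p_k, and (ṗ_k, ω_k) = (e_h × p_k, e_h) for h = 1,2,3 — together span a subspace of dimension 7 of ℝ^{6n} whenever the points are not all collinear (n ≥ 3). -/
import Mathlib

open Matrix BigOperators

/-- Skew-symmetric cross-product matrix `[x]ₓ`. -/
def skew3 (x : Fin 3 → ℝ) : Matrix (Fin 3) (Fin 3) ℝ :=
  !![0, -x 2, x 1; x 2, 0, -x 0; -x 1, x 0, 0]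

theorem trivial_variation_space_dim_seven (n : ℕ) (hn : 3 ≤ n)
    (p : Fin n → Fin 3 → ℝ) (hp : Function.Injective p)
    (hcol : ¬ Collinear ℝ (Set.range p)) :
    Module.finrank ℝ
      ↥(Submodule.span ℝ
        (({x : (Fin n → Fin 3 → ℝ) × (Fin n → Fin 3 → ℝ) |
            ∃ v : Fin 3 → ℝ, x = (fun _ => v, 0)} ∪
          {(p, 0)} ∪
          {x : (Fin n → Fin 3 → ℝ) × (Fin n → Fin 3 → ℝ) |
            ∃ h : Fin 3, x = (fun k => (skew3 (Pi.single h 1)).mulVec (p k),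
              fun _ => Pi.single h 1)}))) = 7 := by
  classical
  set e : Fin 3 → Fin 3 → ℝ := fun h => Pi.single h 1 with he
  set f : Fin 7 → (Fin n → Fin 3 → ℝ) × (Fin n → Fin 3 → ℝ) :=
    ![(fun _ => e 0, 0), (fun _ => e 1, 0), (fun _ => e 2, 0), (p, 0),
      (fun k => (skew3 (e 0)).mulVec (p k), fun _ => e 0),
      (fun k => (skew3 (e 1)).mulVec (p k), fun _ => e 1),
      (fun k => (skew3 (e 2)).mulVec (p k), fun _ => e 2)] with hf
  have hspan : Submodule.span ℝ
      (({x : (Fin n → Fin 3 → ℝ) × (Fin n → Fin 3 → ℝ) |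
          ∃ v : Fin 3 → ℝ, x = (fun _ => v, 0)} ∪
        {(p, 0)} ∪
        {x : (Fin n → Fin 3 → ℝ) × (Fin n → Fin 3 → ℝ) |
          ∃ h : Fin 3, x = (fun k => (skew3 (Pi.single h 1)).mulVec (p k),
            fun _ => Pi.single h 1)})) = Submodule.span ℝ (Set.range f) := by
    apply le_antisymm
    · rw [Submodule.span_le]
      rintro x ((⟨v, rfl⟩ | rfl) | ⟨h, rfl⟩)
      · have hx : ((fun _ => v, 0) : (Fin n → Fin 3 → ℝ) × (Fin n → Fin 3 → ℝ))
            = v 0 • f 0 + v 1 • f 1 + v 2 • f 2 := by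
          refine Prod.ext ?_ ?_
          · funext k j
            fin_cases j <;> simp [hf, he, Pi.single_apply]
          · simp [hf]
        rw [hx]
        exact Submodule.add_mem _ (Submodule.add_mem _
          (Submodule.smul_mem _ _ (Submodule.subset_span ⟨0, rfl⟩))
          (Submodule.smul_mem _ _ (Submodule.subset_span ⟨1, rfl⟩)))
          (Submodule.smul_mem _ _ (Submodule.subset_span ⟨2, rfl⟩))
      · exact Submodule.subset_span ⟨3, rfl⟩
      · fin_cases h
        · exact Submodule.subset_span ⟨4, rfl⟩
        · exact Submodule.subset_span ⟨5, rfl⟩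
        · exact Submodule.subset_span ⟨6, rfl⟩
    · rw [Submodule.span_le]
      rintro x ⟨i, rfl⟩
      apply Submodule.subset_span
      fin_cases i
      · exact Or.inl (Or.inl ⟨e 0, rfl⟩)
      · exact Or.inl (Or.inl ⟨e 1, rfl⟩)
      · exact Or.inl (Or.inl ⟨e 2, rfl⟩)
      · exact Or.inl (Or.inr rfl)
      · exact Or.inr ⟨0, rfl⟩
      · exact Or.inr ⟨1, rfl⟩
      · exact Or.inr ⟨2, rfl⟩
  rw [hspan]
  have hindep : LinearIndependent ℝ f := by
    rw [Fintype.linearIndependent_iff]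
    intro g hg
    rw [Fin.sum_univ_seven] at hg
    set k0 : Fin n := ⟨0, by omega⟩ with hk0
    set k1 : Fin n := ⟨1, by omega⟩ with hk1
    have hf5 : f 5 = (fun k => (skew3 (e 1)).mulVec (p k), fun _ => e 1) := rfl
    have hf6 : f 6 = (fun k => (skew3 (e 2)).mulVec (p k), fun _ => e 2) := rfl
    rw [hf5, hf6] at hg
    have h4 : g 4 = 0 := by
      simpa [hf, he, Pi.single_apply] using congrArg (fun x => x.2 k0 (0 : Fin 3)) hg
    have h5 : g 5 = 0 := by
      simpa [hf, he, Pi.single_apply] using congrArg (fun x => x.2 k0 (1 : Fin 3)) hg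
    have h6 : g 6 = 0 := by
      simpa [hf, he, Pi.single_apply] using congrArg (fun x => x.2 k0 (2 : Fin 3)) hg
    have hA0 : ∀ k, g 0 + g 3 * p k 0 = 0 := fun k => by
      simpa [hf, he, h4, h5, h6, Pi.single_apply] using
        congrArg (fun x => x.1 k (0 : Fin 3)) hg
    have hA1 : ∀ k, g 1 + g 3 * p k 1 = 0 := fun k => by
      simpa [hf, he, h4, h5, h6, Pi.single_apply] using
        congrArg (fun x => x.1 k (1 : Fin 3)) hg
    have hA2 : ∀ k, g 2 + g 3 * p k 2 = 0 := fun k => by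
      simpa [hf, he, h4, h5, h6, Pi.single_apply] using
        congrArg (fun x => x.1 k (2 : Fin 3)) hg
    have hne : p k0 ≠ p k1 := by
      intro hEq
      have h := congrArg Fin.val (hp hEq)
      simp [hk0, hk1] at h
    obtain ⟨j, hj⟩ : ∃ j, p k0 j ≠ p k1 j := by
      by_contra hcon
      push_neg at hcon
      exact hne (funext hcon)
    have h3 : g 3 = 0 := by
      have key : ∀ j : Fin 3, p k0 j ≠ p k1 j → g 3 = 0 := by
        intro j hj
        fin_cases j
        · have hz : g 3 * (p k0 0 - p k1 0) = 0 := by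
            linear_combination hA0 k0 - hA0 k1
          rcases mul_eq_zero.1 hz with h | h
          · exact h
          · exact absurd (sub_eq_zero.1 h) hj
        · have hz : g 3 * (p k0 1 - p k1 1) = 0 := by
            linear_combination hA1 k0 - hA1 k1
          rcases mul_eq_zero.1 hz with h | h
          · exact h
          · exact absurd (sub_eq_zero.1 h) hj
        · have hz : g 3 * (p k0 2 - p k1 2) = 0 := by
            linear_combination hA2 k0 - hA2 k1
          rcases mul_eq_zero.1 hz with h | h
          · exact h
          · exact absurd (sub_eq_zero.1 h) hj
      exact key j hj
    have h0 : g 0 = 0 := by have := hA0 k0; rw [h3] at this; linarith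
    have h1 : g 1 = 0 := by have := hA1 k0; rw [h3] at this; linarith
    have h2 : g 2 = 0 := by have := hA2 k0; rw [h3] at this; linarith
    intro i
    fin_cases i <;> assumption
  rw [finrank_span_eq_card hindep]
  simp
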